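/- arXiv:math/0509138 — 2 statements merged into one kernel-verified Lean document; each statement's English description precedes it below -/
import Mathlib

section
/- Let A be a K-bialgebra and g(t) = Σ_{m≥0} g_m t^m ∈ A[[t]] with g(0)=1 invertible coefficient-wise such that the coefficients of g(t) form a divided power series. Let f(t) ∈ A[[t]] be the unique series with f(-t)g(t) = g(t)f(-t) = 1. Then the coefficients of f(t) also form a divided power series. -/
open scoped TensorProduct

/-- The substitution `t ↦ -t` in a formal power series over a
(possibly noncommutative) ring `A`. -/
noncomputable def negT {A : Type*} [Ring A] (f : PowerSeries A) : PowerSeries A :=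
  PowerSeries.mk fun n => (-1 : A) ^ n * PowerSeries.coeff n f

section Aux

variable {B : Type*} [Ring B]

lemma negT_coeff (f : PowerSeries B) (n : ℕ) :
    PowerSeries.coeff n (negT f) = (-1 : B) ^ n * PowerSeries.coeff n f := by
  simp [negT]

lemma negT_negT (f : PowerSeries B) : negT (negT f) = f := by
  ext n
  rw [negT_coeff, negT_coeff, ← mul_assoc, ← pow_add, Even.neg_one_pow ⟨n, rfl⟩, one_mul]

lemma negT_one : negT (1 : PowerSeries B) = 1 := by
  ext n
  rw [negT_coeff]
  cases n <;> simp

lemma negT_mul (x y : PowerSeries B) : negT (x * y) = negT x * negT y := by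
  ext n
  rw [negT_coeff, PowerSeries.coeff_mul, PowerSeries.coeff_mul, Finset.mul_sum]
  refine Finset.sum_congr rfl fun p hp => ?_
  rw [Finset.HasAntidiagonal.mem_antidiagonal] at hp
  rw [negT_coeff, negT_coeff]
  have hc : (-1 : B) ^ p.2 * PowerSeries.coeff p.1 x
      = PowerSeries.coeff p.1 x * (-1 : B) ^ p.2 :=
    (((Commute.neg_one_left (PowerSeries.coeff p.1 x))).pow_left _).eq
  rw [← hp, pow_add, mul_assoc, mul_assoc, ← mul_assoc ((-1:B)^p.2), hc,
    mul_assoc, ← mul_assoc]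

/-- If two power series have pairwise commuting coefficients they commute. -/
lemma psMulComm (x y : PowerSeries B)
    (h : ∀ i j, Commute (PowerSeries.coeff i x) (PowerSeries.coeff j y)) :
    x * y = y * x := by
  ext n
  rw [PowerSeries.coeff_mul, PowerSeries.coeff_mul]
  conv_lhs => rw [← Finset.HasAntidiagonal.map_swap_antidiagonal (n := n), Finset.sum_map]
  simp only [Function.Embedding.coeFn_mk, Prod.fst_swap, Prod.snd_swap]
  exact Finset.sum_congr rfl fun p _ => (h p.2 p.1).eq

lemma left_right_inv {u v w : PowerSeries B} (h1 : u * v = 1) (h2 : v * w = 1) :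
    u = w := by
  calc u = u * (v * w) := by rw [h2, mul_one]
  _ = (u * v) * w := by rw [mul_assoc]
  _ = w := by rw [h1, one_mul]

end Aux

section Bialg

variable (K : Type*) (A : Type*) [CommRing K] [Ring A] [Bialgebra K A]

/-- Comultiplication as a ring hom. -/
noncomputable def comulRH : A →+* A ⊗[K] A := (Bialgebra.comulAlgHom K A).toRingHom

/-- Counit as a ring hom. -/
noncomputable def counitRH : A →+* K := (Bialgebra.counitAlgHom K A).toRingHom

/-- Left inclusion `a ↦ a ⊗ 1` as a ring hom. -/
noncomputable def incL : A →+* A ⊗[K] A :=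
  (Algebra.TensorProduct.includeLeft (S := K) : A →ₐ[K] A ⊗[K] A).toRingHom

/-- Right inclusion `a ↦ 1 ⊗ a` as a ring hom. -/
noncomputable def incR : A →+* A ⊗[K] A :=
  (Algebra.TensorProduct.includeRight : A →ₐ[K] A ⊗[K] A).toRingHom

variable {K A}

lemma comulRH_apply (a : A) : comulRH K A a = Coalgebra.comul (R := K) a := rfl

lemma counitRH_apply (a : A) : counitRH K A a = Coalgebra.counit (R := K) a := rfl

lemma incL_apply (a : A) : incL K A a = a ⊗ₜ[K] (1 : A) := rfl

lemma incR_apply (a : A) : incR K A a = (1 : A) ⊗ₜ[K] a := rfl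

lemma neg_one_pow_tmul (i j : ℕ) (a b : A) :
    ((-1 : A) ^ i * a) ⊗ₜ[K] ((-1 : A) ^ j * b)
      = (-1 : A ⊗[K] A) ^ (i + j) * (a ⊗ₜ[K] b) := by
  have hL : ((-1 : A) ^ i) ⊗ₜ[K] (1 : A) = (-1 : A ⊗[K] A) ^ i := by
    have h := map_pow (incL K A) (-1 : A) i
    rw [incL_apply] at h
    rw [h, map_neg, map_one]
  have hR : (1 : A) ⊗ₜ[K] ((-1 : A) ^ j) = (-1 : A ⊗[K] A) ^ j := by
    have h := map_pow (incR K A) (-1 : A) j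
    rw [incR_apply] at h
    rw [h, map_neg, map_one]
  rw [pow_add, ← hL, ← hR, mul_assoc, Algebra.TensorProduct.tmul_mul_tmul,
    Algebra.TensorProduct.tmul_mul_tmul, one_mul, one_mul]

/-- If `g'` is a two-sided inverse of `f` and the coefficients of `g'` form a
divided power series, so do those of `f` (comultiplication part). -/
lemma aux_comul (f g' : PowerSeries A)
    (hdiv' : ∀ n : ℕ, Coalgebra.comul (R := K) (PowerSeries.coeff n g') =
      ∑ p ∈ Finset.HasAntidiagonal.antidiagonal n,
        (PowerSeries.coeff p.1 g') ⊗ₜ[K] (PowerSeries.coeff p.2 g'))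
    (h1 : f * g' = 1) (h2 : g' * f = 1) :
    ∀ n : ℕ, Coalgebra.comul (R := K) (PowerSeries.coeff n f) =
      ∑ p ∈ Finset.HasAntidiagonal.antidiagonal n,
        (PowerSeries.coeff p.1 f) ⊗ₜ[K] (PowerSeries.coeff p.2 f) := by
  have hφg : PowerSeries.map (comulRH K A) g'
      = PowerSeries.map (incL K A) g' * PowerSeries.map (incR K A) g' := by
    ext n
    rw [PowerSeries.coeff_map, PowerSeries.coeff_mul, comulRH_apply, hdiv']
    refine Finset.sum_congr rfl fun p _ => ?_
    rw [PowerSeries.coeff_map, PowerSeries.coeff_map, incL_apply, incR_apply,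
      Algebra.TensorProduct.tmul_mul_tmul, one_mul, mul_one]
  have commRL : PowerSeries.map (incR K A) f * PowerSeries.map (incL K A) g'
      = PowerSeries.map (incL K A) g' * PowerSeries.map (incR K A) f := by
    refine psMulComm _ _ fun i j => ?_
    rw [PowerSeries.coeff_map, PowerSeries.coeff_map, incR_apply, incL_apply]
    show _ * _ = _ * _
    rw [Algebra.TensorProduct.tmul_mul_tmul, Algebra.TensorProduct.tmul_mul_tmul,
      one_mul, mul_one, one_mul, mul_one]
  have key1 : (PowerSeries.map (incL K A) f * PowerSeries.map (incR K A) f)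
      * PowerSeries.map (comulRH K A) g' = 1 := by
    rw [hφg]
    have hre : PowerSeries.map (incL K A) f * PowerSeries.map (incR K A) f
        * (PowerSeries.map (incL K A) g' * PowerSeries.map (incR K A) g')
        = (PowerSeries.map (incL K A) f * PowerSeries.map (incL K A) g')
          * (PowerSeries.map (incR K A) f * PowerSeries.map (incR K A) g') := by
      rw [mul_assoc, ← mul_assoc (PowerSeries.map (incR K A) f), commRL]
      rw [mul_assoc (PowerSeries.map (incL K A) g'), ← mul_assoc, ← mul_assoc]
    rw [hre, ← map_mul, ← map_mul, h1, map_one, map_one, one_mul]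
  have key2 : PowerSeries.map (comulRH K A) g' * PowerSeries.map (comulRH K A) f = 1 := by
    rw [← map_mul, h2, map_one]
  have main : PowerSeries.map (incL K A) f * PowerSeries.map (incR K A) f
      = PowerSeries.map (comulRH K A) f := left_right_inv key1 key2
  intro n
  have h := congrArg (PowerSeries.coeff n) main
  rw [PowerSeries.coeff_map, PowerSeries.coeff_mul, comulRH_apply] at h
  rw [← h]
  refine Finset.sum_congr rfl fun p _ => ?_
  rw [PowerSeries.coeff_map, PowerSeries.coeff_map, incL_apply, incR_apply,
    Algebra.TensorProduct.tmul_mul_tmul, one_mul, mul_one]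

end Bialg

/-- Let `A` be a `K`-bialgebra and `g(t) = ∑ g_m t^m ∈ A[[t]]`
with `g(0) = 1` whose coefficients form a divided power series.  If
`f(t) ∈ A[[t]]` satisfies `f(-t) g(t) = g(t) f(-t) = 1`, then the coefficients
of `f(t)` also form a divided power series. -/
theorem stmt5 {K A : Type*} [CommRing K] [Ring A] [Bialgebra K A]
    (g f : PowerSeries A)
    (hg0 : PowerSeries.coeff 0 g = 1)
    (hdiv : ∀ n : ℕ, Coalgebra.comul (R := K) (PowerSeries.coeff n g) =
      ∑ p ∈ Finset.HasAntidiagonal.antidiagonal n,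
        (PowerSeries.coeff p.1 g) ⊗ₜ[K] (PowerSeries.coeff p.2 g))
    (hcounit : ∀ n : ℕ, Coalgebra.counit (R := K) (PowerSeries.coeff n g) =
      if n = 0 then 1 else 0)
    (hfg : negT f * g = 1) (hgf : g * negT f = 1) :
    (∀ n : ℕ, Coalgebra.comul (R := K) (PowerSeries.coeff n f) =
      ∑ p ∈ Finset.HasAntidiagonal.antidiagonal n,
        (PowerSeries.coeff p.1 f) ⊗ₜ[K] (PowerSeries.coeff p.2 f)) ∧
    (∀ n : ℕ, Coalgebra.counit (R := K) (PowerSeries.coeff n f) =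
      if n = 0 then 1 else 0) := by
  have hfgN : f * negT g = 1 := by
    have h := congrArg negT hfg
    rwa [negT_mul, negT_negT, negT_one] at h
  have hgNf : negT g * f = 1 := by
    have h := congrArg negT hgf
    rwa [negT_mul, negT_negT, negT_one] at h
  -- negT g also has divided power coefficients
  have hdivN : ∀ n : ℕ, Coalgebra.comul (R := K) (PowerSeries.coeff n (negT g)) =
      ∑ p ∈ Finset.HasAntidiagonal.antidiagonal n,
        (PowerSeries.coeff p.1 (negT g)) ⊗ₜ[K] (PowerSeries.coeff p.2 (negT g)) := by
    intro n
    rw [negT_coeff, ← comulRH_apply, map_mul, map_pow, map_neg, map_one,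
      comulRH_apply, hdiv, Finset.mul_sum]
    refine Finset.sum_congr rfl fun p hp => ?_
    rw [Finset.HasAntidiagonal.mem_antidiagonal] at hp
    rw [negT_coeff, negT_coeff, neg_one_pow_tmul, hp]
  constructor
  · exact aux_comul f (negT g) hdivN hfgN hgNf
  · -- counit part
    have hεgN : PowerSeries.map (counitRH K A) (negT g) = 1 := by
      ext n
      rw [PowerSeries.coeff_map, negT_coeff, map_mul, map_pow, map_neg, map_one,
        counitRH_apply, hcounit]
      cases n with
      | zero => simp
      | succ m => simp [PowerSeries.coeff_one]
    have hεf : PowerSeries.map (counitRH K A) f = 1 := by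
      have h := congrArg (PowerSeries.map (counitRH K A)) hgNf
      rw [map_mul, map_one, hεgN, one_mul] at h
      exact h
    intro n
    have h := congrArg (PowerSeries.coeff n) hεf
    rw [PowerSeries.coeff_map, counitRH_apply] at h
    rw [h]
    cases n <;> simp [PowerSeries.coeff_one]
end

section
/- For any finite poset P with p elements, the strict order polynomial and the order polynomial satisfy the reciprocity relation Ω̄(P, s) = (-1)^p Ω(P, -s). -/
open Finset Polynomial


/-- Cardinality of strictly monotone maps `Fin q → Fin N`. -/
lemma card_strictMono_fin (q N : ℕ) :
    Nat.card {h : Fin q → Fin N // StrictMono h} = N.choose q := by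
  classical
  have E : {h : Fin q → Fin N // StrictMono h} ≃ {s : Finset (Fin N) // s.card = q} := by
    refine ⟨fun h => ⟨Finset.univ.image h.1, ?_⟩,
      fun s => ⟨(s.1.orderEmbOfFin s.2 : Fin q → Fin N), (s.1.orderEmbOfFin s.2).strictMono⟩,
      ?_, ?_⟩
    · rw [Finset.card_image_of_injective _ h.2.injective, Finset.card_univ, Fintype.card_fin]
    · rintro ⟨h, hmono⟩
      refine Subtype.ext ?_
      exact (Finset.orderEmbOfFin_unique _ (fun x => Finset.mem_image_of_mem _ (mem_univ x))
        hmono).symm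
    · rintro ⟨s, hs⟩
      refine Subtype.ext ?_
      apply Finset.coe_injective
      rw [Finset.coe_image, Finset.coe_univ, Set.image_univ, ← Finset.range_orderEmbOfFin s hs]
  rw [Nat.card_congr E, Nat.card_eq_fintype_card, Fintype.card_finset_len, Fintype.card_fin]

section Count

variable {m : ℕ} (T : Finset (Fin m))

private def Ak (m k : ℕ) : Finset (Fin m) := Finset.univ.filter fun j => (j : ℕ) < k

private def tbf (k : ℕ) : ℕ := ((Ak m k).filter (· ∈ T)).card

private def cf (k : ℕ) : ℕ := ((Ak m k).filter (· ∉ T)).card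

private lemma card_Ak {k : ℕ} (hk : k ≤ m) : (Ak m k).card = k := by
  have : Ak m k = (Finset.range k).attachFin
      (fun x hx => lt_of_lt_of_le (Finset.mem_range.1 hx) hk) := by
    ext j; simp [Ak, Finset.mem_attachFin]
  rw [this, Finset.card_attachFin, Finset.card_range]

private lemma tb_add_c (k : ℕ) : tbf T k + cf T k = (Ak m k).card :=
  Finset.card_filter_add_card_filter_not _

private lemma tb_mono {k l : ℕ} (hkl : k ≤ l) : tbf T k ≤ tbf T l := by
  apply Finset.card_le_card
  intro j hj
  simp only [Ak, Finset.mem_filter, Finset.mem_univ, true_and] at hj ⊢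
  exact ⟨lt_of_lt_of_le hj.1 hkl, hj.2⟩

private lemma tb_le_card (k : ℕ) : tbf T k ≤ T.card := by
  apply Finset.card_le_card
  intro j hj
  simp only [Finset.mem_filter] at hj
  exact hj.2

private lemma tb_full {k : ℕ} (hk : m ≤ k) : tbf T k = T.card := by
  unfold tbf
  congr 1
  ext j
  simp only [Ak, Finset.mem_filter, Finset.mem_univ, true_and]
  exact ⟨fun h => h.2, fun h => ⟨lt_of_lt_of_le j.2 hk, h⟩⟩

private lemma Ak_succ {k : ℕ} (hk : k < m) :
    Ak m (k + 1) = insert ⟨k, hk⟩ (Ak m k) := by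
  ext j
  simp only [Ak, Finset.mem_filter, Finset.mem_univ, true_and, Finset.mem_insert, Fin.ext_iff]
  omega

private lemma mk_not_mem_Ak {k : ℕ} (hk : k < m) : (⟨k, hk⟩ : Fin m) ∉ Ak m k := by
  simp [Ak]

private lemma cf_succ_mem {k : ℕ} (hk : k < m) (hT : (⟨k, hk⟩ : Fin m) ∈ T) :
    cf T (k + 1) = cf T k := by
  unfold cf
  rw [Ak_succ hk, Finset.filter_insert, if_neg (by simpa using hT)]

private lemma cf_succ_not {k : ℕ} (hk : k < m) (hT : (⟨k, hk⟩ : Fin m) ∉ T) :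
    cf T (k + 1) = cf T k + 1 := by
  unfold cf
  rw [Ak_succ hk, Finset.filter_insert, if_pos (by simpa using hT),
    Finset.card_insert_of_notMem (fun h => mk_not_mem_Ak hk (Finset.mem_filter.1 h).1)]

private lemma cf_le_free (k : ℕ) : cf T k ≤ m - T.card := by
  have h1 : cf T k ≤ (Finset.univ.filter (· ∉ T)).card := by
    apply Finset.card_le_card
    intro j hj
    simp only [Finset.mem_filter, Finset.mem_univ, true_and] at hj ⊢
    exact hj.2
  have h2 : (Finset.univ.filter (· ∈ T)).card + (Finset.univ.filter (· ∉ T)).card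
      = Fintype.card (Fin m) := by
    rw [← Finset.card_univ]; exact Finset.card_filter_add_card_filter_not _
  have h3 : Finset.univ.filter (· ∈ T) = T := by ext j; simp
  rw [h3, Fintype.card_fin] at h2
  omega

lemma strictMono_fin_gap {N q : ℕ} {h : Fin q → Fin N} (hs : StrictMono h) :
    ∀ a b : Fin q, a ≤ b → (h a : ℕ) + ((b : ℕ) - (a : ℕ)) ≤ h b := by
  intro a b hab
  obtain ⟨d, hd⟩ : ∃ d, (b : ℕ) = (a : ℕ) + d := ⟨(b : ℕ) - a, by omega⟩
  clear hab
  induction d generalizing b with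
  | zero =>
    have : a = b := Fin.ext (by omega)
    subst this; simp
  | succ d ih =>
    have hbq : (b : ℕ) < q := b.2
    have hq : (a : ℕ) + d < q := by omega
    have h1 := ih ⟨(a : ℕ) + d, hq⟩ rfl
    have h2 : h ⟨(a : ℕ) + d, hq⟩ < h b := hs (by rw [Fin.lt_def]; simp; omega)
    rw [Fin.lt_def] at h2
    simp only [Fin.val_mk] at h1 h2
    omega

lemma count_mono_strict (n : ℕ) :
    Nat.card {g : Fin (m+1) → Fin n // Monotone g ∧ ∀ k ∈ T, g k.castSucc < g k.succ}
      = (n + m - T.card).choose (m+1) := by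
  have hTm : T.card ≤ m := by simpa using Finset.card_le_univ T
  have hcletb : ∀ k : ℕ, k ≤ m → cf T k + tbf T k = k := by
    intro k hk
    have := tb_add_c T k
    rw [card_Ak hk] at this
    omega
  have key : {g : Fin (m+1) → Fin n // Monotone g ∧ ∀ k ∈ T, g k.castSucc < g k.succ}
      ≃ {h : Fin (m+1) → Fin (n + m - T.card) // StrictMono h} := by
    refine ⟨fun g => ⟨fun k => ⟨(g.1 k : ℕ) + cf T (k : ℕ), ?_⟩, ?_⟩,
           fun h => ⟨fun k => ⟨(h.1 k : ℕ) - cf T (k : ℕ), ?_⟩, ?_, ?_⟩, ?_, ?_⟩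
    · -- bound for forward
      have h1 := (g.1 k).2
      have h2 := cf_le_free T (k : ℕ)
      omega
    · -- strict mono of forward
      rw [Fin.strictMono_iff_lt_succ]
      intro k
      simp only [Fin.lt_def, Fin.coe_castSucc, Fin.val_succ]
      by_cases hT : k ∈ T
      · have hstep := cf_succ_mem T k.2 (by simpa using hT)
        have := g.2.2 k hT
        rw [Fin.lt_def] at this
        omega
      · have hstep := cf_succ_not T k.2 (by simpa using hT)
        have := g.2.1 (Fin.castSucc_le_succ k)
        simp only [Fin.le_def, Fin.coe_castSucc, Fin.val_succ] at this
        omega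
    · -- bound for inverse
      have hlast := strictMono_fin_gap h.2 k (Fin.last m) (Fin.le_last k)
      have hge := strictMono_fin_gap h.2 0 k (Fin.zero_le _)
      have h1 := hcletb (k : ℕ) (Nat.lt_succ_iff.mp k.isLt)
      have h2 := tb_le_card T (k : ℕ)
      simp only [Fin.val_last] at hlast
      simp only [Fin.val_zero, Nat.sub_zero] at hge
      omega
    · -- monotone of inverse
      rw [Fin.monotone_iff_le_succ]
      intro k
      have hstep : (h.1 k.castSucc : ℕ) < h.1 k.succ := h.2 (Fin.castSucc_lt_succ (i := k))
      have hck : cf T (k : ℕ) ≤ (h.1 k.castSucc : ℕ) := by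
        have h1 := hcletb (k : ℕ) k.isLt.le
        have h2 := strictMono_fin_gap h.2 0 k.castSucc (Fin.zero_le _)
        simp only [Fin.val_zero, Fin.coe_castSucc] at h2
        omega
      simp only [Fin.le_def, Fin.coe_castSucc, Fin.val_succ]
      by_cases hT : k ∈ T
      · have := cf_succ_mem T k.2 (by simpa using hT)
        omega
      · have := cf_succ_not T k.2 (by simpa using hT)
        omega
    · -- strict at T of inverse
      intro k hT
      have hstep : (h.1 k.castSucc : ℕ) < h.1 k.succ := h.2 (Fin.castSucc_lt_succ (i := k))
      have hck : cf T (k : ℕ) ≤ (h.1 k.castSucc : ℕ) := by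
        have h1 := hcletb (k : ℕ) k.isLt.le
        have h2 := strictMono_fin_gap h.2 0 k.castSucc (Fin.zero_le _)
        simp only [Fin.val_zero, Fin.coe_castSucc] at h2
        omega
      have := cf_succ_mem T k.2 (by simpa using hT)
      simp only [Fin.lt_def, Fin.coe_castSucc, Fin.val_succ]
      omega
    · -- left inverse
      rintro ⟨g, hg⟩
      apply Subtype.ext
      funext k
      apply Fin.ext
      simp only
      omega
    · -- right inverse
      rintro ⟨h, hh⟩
      apply Subtype.ext
      funext k
      apply Fin.ext
      simp only
      have hck : cf T (k : ℕ) ≤ (h k : ℕ) := by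
        have h1 := hcletb (k : ℕ) (Nat.lt_succ_iff.mp k.isLt)
        have h2 := strictMono_fin_gap hh 0 k (Fin.zero_le _)
        simp only [Fin.val_zero] at h2
        omega
      omega
  rw [Nat.card_congr key, card_strictMono_fin]

end Count

section Chains

variable {m n : ℕ}

lemma consec_fin {i j : Fin (m+1)} (hij : (j : ℕ) = (i : ℕ) + 1) :
    ∃ k : Fin m, k.castSucc = i ∧ k.succ = j := by
  have hi : (i : ℕ) < m := by have := j.isLt; omega
  exact ⟨⟨(i : ℕ), hi⟩, Fin.ext rfl, Fin.ext (by simp [hij])⟩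

lemma chain_eq {γ : Type*} [LinearOrder γ] {g : Fin (m+1) → γ}
    (hg : Monotone g) {v : Fin (m+1) → Fin (m+1)}
    (H : ∀ k : Fin m, g k.castSucc = g k.succ → v k.castSucc < v k.succ) :
    ∀ i j : Fin (m+1), i < j → g i = g j → v i < v j := by
  have base : ∀ i j : Fin (m+1), (j : ℕ) = (i : ℕ) + 1 → g i = g j → v i < v j := by
    intro i j hij hgij
    obtain ⟨k, hk1, hk2⟩ := consec_fin hij
    rw [← hk1, ← hk2]
    exact H k (by rw [hk1, hk2]; exact hgij)
  intro i j hij hgij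
  obtain ⟨d, hd⟩ : ∃ d, (j : ℕ) = (i : ℕ) + d + 1 := ⟨(j : ℕ) - (i : ℕ) - 1, by
    rw [Fin.lt_def] at hij; omega⟩
  induction d generalizing i with
  | zero => exact base i j (by omega) hgij
  | succ d ih =>
    have hmid : (i : ℕ) + 1 < m + 1 := by have := j.isLt; omega
    set mid : Fin (m+1) := ⟨(i : ℕ) + 1, hmid⟩ with hmid'
    have h1 : g i ≤ g mid := hg (by rw [Fin.le_def]; simp [hmid'])
    have h2 : g mid ≤ g j := hg (by rw [Fin.le_def]; simp [hmid']; omega)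
    have hgim : g i = g mid := le_antisymm h1 (hgij ▸ h2)
    have hgmj : g mid = g j := hgim ▸ hgij
    exact lt_trans (base i mid (by simp [hmid']) hgim)
      (ih mid (by rw [Fin.lt_def]; simp [hmid']; omega) hgmj (by simp [hmid']; omega))

lemma chain_lt {γ : Type*} [LinearOrder γ] {g : Fin (m+1) → γ}
    (hg : Monotone g) {v : Fin (m+1) → Fin (m+1)} (hv : Function.Injective v)
    (H : ∀ k : Fin m, v k.castSucc < v k.succ → g k.castSucc < g k.succ) :
    ∀ i j : Fin (m+1), i < j → g i < g j ∨ v j < v i := by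
  have base : ∀ i j : Fin (m+1), (j : ℕ) = (i : ℕ) + 1 → g i < g j ∨ v j < v i := by
    intro i j hij
    obtain ⟨k, hk1, hk2⟩ := consec_fin hij
    have hne : v i ≠ v j := fun h => by
      have : i = j := hv h
      rw [this] at hij
      omega
    rcases lt_or_gt_of_ne hne with hlt | hgt
    · left; rw [← hk1, ← hk2]; exact H k (by rw [hk1, hk2]; exact hlt)
    · right; exact hgt
  intro i j hij
  obtain ⟨d, hd⟩ : ∃ d, (j : ℕ) = (i : ℕ) + d + 1 := ⟨(j : ℕ) - (i : ℕ) - 1, by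
    rw [Fin.lt_def] at hij; omega⟩
  induction d generalizing i with
  | zero => exact base i j (by omega)
  | succ d ih =>
    have hmid : (i : ℕ) + 1 < m + 1 := by have := j.isLt; omega
    set mid : Fin (m+1) := ⟨(i : ℕ) + 1, hmid⟩ with hmid'
    have hgm1 : g i ≤ g mid := hg (by rw [Fin.le_def]; simp [hmid'])
    have hgm2 : g mid ≤ g j := hg (by rw [Fin.le_def]; simp [hmid']; omega)
    rcases base i mid (by simp [hmid']) with h1 | h1 <;>
      rcases ih mid (by rw [Fin.lt_def]; simp [hmid']; omega) (by simp [hmid']; omega)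
        with h2 | h2
    · exact Or.inl (lt_trans h1 h2)
    · exact Or.inl (lt_of_lt_of_le h1 hgm2)
    · exact Or.inl (lt_of_le_of_lt hgm1 h2)
    · exact Or.inr (lt_trans h2 h1)

end Chains

section Bij

variable {m n : ℕ}

/-- Weak order-preserving w.r.t. relation `le'`. -/
def MonoP (le' : Fin (m+1) → Fin (m+1) → Prop) (f : Fin (m+1) → Fin n) : Prop :=
  ∀ i j, le' i j → f i ≤ f j

/-- Strict order-preserving w.r.t. relation `le'`. -/
def SMonoP (le' : Fin (m+1) → Fin (m+1) → Prop) (f : Fin (m+1) → Fin n) : Prop :=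
  ∀ i j, le' i j → i ≠ j → f i < f j

/-- Linear extension property of a permutation (as a listing). -/
def LinE (le' : Fin (m+1) → Fin (m+1) → Prop) (w : Equiv.Perm (Fin (m+1))) : Prop :=
  ∀ k l, le' (w k) (w l) → w k ≠ w l → k < l

/-- Descent set of a listing. -/
noncomputable def Dset (w : Equiv.Perm (Fin (m+1))) : Finset (Fin m) := by
  classical exact Finset.univ.filter fun k : Fin m => w k.succ < w k.castSucc

/-- Ascent set of a listing. -/
noncomputable def Aset (w : Equiv.Perm (Fin (m+1))) : Finset (Fin m) := by
  classical exact Finset.univ.filter fun k : Fin m => w k.castSucc < w k.succ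

lemma mem_Dset {w : Equiv.Perm (Fin (m+1))} {k : Fin m} :
    k ∈ Dset w ↔ w k.succ < w k.castSucc := by
  classical
  simp [Dset]

lemma mem_Aset {w : Equiv.Perm (Fin (m+1))} {k : Fin m} :
    k ∈ Aset w ↔ w k.castSucc < w k.succ := by
  classical
  simp [Aset]

lemma Aset_card (w : Equiv.Perm (Fin (m+1))) : (Aset w).card = m - (Dset w).card := by
  classical
  have h : Aset w = (Dset w)ᶜ := by
    ext k
    rw [Finset.mem_compl, mem_Aset, mem_Dset]
    constructor
    · exact fun h1 h2 => absurd h1 (asymm h2)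
    · intro h1
      have hne : w k.castSucc ≠ w k.succ :=
        w.injective.ne (Fin.castSucc_lt_succ (i := k)).ne
      exact (lt_or_gt_of_ne hne).resolve_right h1
  rw [h, Finset.card_compl, Fintype.card_fin]

lemma Dset_card_le (w : Equiv.Perm (Fin (m+1))) : (Dset w).card ≤ m := by
  simpa using Finset.card_le_univ (Dset w)

open scoped Classical in
/-- Stanley's decomposition: counting weak order-preserving maps via linear extensions. -/
lemma weak_card (le' : Fin (m+1) → Fin (m+1) → Prop)
    (hnat : ∀ i j, le' i j → i ≠ j → i < j) (n : ℕ) :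
    Nat.card {f : Fin (m+1) → Fin n // MonoP le' f} =
      ∑ w : Equiv.Perm (Fin (m+1)),
        if LinE le' w then (n + m - (Dset w).card).choose (m+1) else 0 := by
  classical
  let invMap : (Σ w : {w : Equiv.Perm (Fin (m+1)) // LinE le' w},
      {g : Fin (m+1) → Fin n // Monotone g ∧ ∀ k ∈ Dset w.1, g k.castSucc < g k.succ}) →
      {f : Fin (m+1) → Fin n // MonoP le' f} := fun x =>
    ⟨x.2.1 ∘ x.1.1.symm, by
      intro i j hle
      by_cases hij : i = j
      · rw [hij]
      · have hab : x.1.1.symm i < x.1.1.symm j := by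
          refine x.1.2 _ _ ?_ ?_ <;> rw [x.1.1.apply_symm_apply, x.1.1.apply_symm_apply]
          exacts [hle, hij]
        exact x.2.2.1 hab.le⟩
  have hsort : ∀ (w : Equiv.Perm (Fin (m+1))) (g : Fin (m+1) → Fin n),
      Monotone g → (∀ k ∈ Dset w, g k.castSucc < g k.succ) →
      w = Tuple.sort (g ∘ w.symm) := by
    intro w g hg hd
    rw [Tuple.eq_sort_iff]
    have hfw : ∀ i, (g ∘ w.symm) (w i) = g i := fun i => by simp
    constructor
    · intro i j hij
      simp only [Function.comp_apply, Equiv.symm_apply_apply]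
      exact hg hij
    · intro i j hij hfij
      rw [hfw, hfw] at hfij
      refine chain_eq hg (fun k hk => ?_) i j hij hfij
      by_contra hcon
      have hne : w k.castSucc ≠ w k.succ := w.injective.ne (Fin.castSucc_lt_succ (i := k)).ne
      have hmem : k ∈ Dset w := mem_Dset.2 ((lt_or_gt_of_ne hne).resolve_left hcon)
      exact (hd k hmem).ne hk
  have hbij : Function.Bijective invMap := by
    constructor
    · rintro ⟨⟨w1, hw1⟩, g1, hg1, hd1⟩ ⟨⟨w2, hw2⟩, g2, hg2, hd2⟩ heq
      simp only [invMap, Subtype.mk.injEq] at heq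
      replace heq := Subtype.mk.inj heq
      obtain rfl : w1 = w2 := by
        rw [hsort w1 g1 hg1 hd1, heq, ← hsort w2 g2 hg2 hd2]
      obtain rfl : g1 = g2 := by
        funext k
        have h := congrFun heq (w1 k)
        simpa using h
      rfl
    · rintro ⟨f, hf⟩
      have hs := Tuple.eq_sort_iff.mp (rfl : Tuple.sort f = Tuple.sort f)
      set σ := Tuple.sort f with hσ
      have hLin : LinE le' σ := by
        intro k l hle hne
        have hkl : k ≠ l := fun h => hne (by rw [h])
        rcases lt_or_gt_of_ne hkl with h | h
        · exact h
        · exfalso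
          have h1 : f (σ l) ≤ f (σ k) := hs.1 h.le
          have h2 : f (σ k) ≤ f (σ l) := hf _ _ hle
          have h3 : σ l < σ k := hs.2 l k h (le_antisymm h1 h2)
          exact absurd (hnat _ _ hle hne) (asymm h3)
      refine ⟨⟨⟨σ, hLin⟩, ⟨f ∘ σ, hs.1, ?_⟩⟩, ?_⟩
      · intro k hk
        have hlt := mem_Dset.1 hk
        have hle : (f ∘ σ) k.castSucc ≤ (f ∘ σ) k.succ := hs.1 (Fin.castSucc_le_succ k)
        rcases hle.lt_or_eq with h | h
        · exact h
        · exact absurd (hs.2 _ _ (Fin.castSucc_lt_succ (i := k)) h) (asymm hlt)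
      · apply Subtype.ext
        funext x
        simp [invMap]
  rw [← Nat.card_eq_of_bijective invMap hbij, Nat.card_eq_fintype_card, Fintype.card_sigma]
  have hcount : ∀ w : {w : Equiv.Perm (Fin (m+1)) // LinE le' w},
      Fintype.card {g : Fin (m+1) → Fin n //
          Monotone g ∧ ∀ k ∈ Dset w.1, g k.castSucc < g k.succ}
        = (n + m - (Dset w.1).card).choose (m+1) := by
    intro w
    rw [← Nat.card_eq_fintype_card]
    exact count_mono_strict (Dset w.1) n
  rw [Finset.sum_congr rfl (fun w _ => hcount w),
    ← Finset.sum_subtype (Finset.univ.filter (LinE le')) (by simp)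
      (fun w => (n + m - (Dset w).card).choose (m+1)), Finset.sum_filter]

end Bij

section BijStrict

variable {m n : ℕ}

open scoped Classical in
/-- Stanley's decomposition for strictly order-preserving maps. -/
lemma strict_card (le' : Fin (m+1) → Fin (m+1) → Prop)
    (hnat : ∀ i j, le' i j → i ≠ j → i < j) (n : ℕ) :
    Nat.card {f : Fin (m+1) → Fin n // SMonoP le' f} =
      ∑ w : Equiv.Perm (Fin (m+1)),
        if LinE le' w then (n + (Dset w).card).choose (m+1) else 0 := by
  classical
  let F : (Fin (m+1) → Fin n) → Fin (m+1) → (Fin n ×ₗ Fin (m+1)) :=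
    fun f i => toLex (f i, i.rev)
  have hFinj : ∀ f, Function.Injective (F f) := by
    intro f a b hab
    have h2 := congrArg (fun x => (ofLex x).2) hab
    simp only [F, ofLex_toLex] at h2
    exact Fin.rev_injective h2
  let invMap : (Σ w : {w : Equiv.Perm (Fin (m+1)) // LinE le' w},
      {g : Fin (m+1) → Fin n // Monotone g ∧ ∀ k ∈ Aset w.1, g k.castSucc < g k.succ}) →
      {f : Fin (m+1) → Fin n // SMonoP le' f} := fun x =>
    ⟨x.2.1 ∘ x.1.1.symm, by
      intro i j hle hij
      have hlt : i < j := hnat i j hle hij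
      have hab : x.1.1.symm i < x.1.1.symm j := by
        refine x.1.2 _ _ ?_ ?_ <;> rw [x.1.1.apply_symm_apply, x.1.1.apply_symm_apply]
        exacts [hle, hij]
      have hch := chain_lt x.2.2.1 x.1.1.injective
          (fun k hk => x.2.2.2 k (mem_Aset.2 hk)) _ _ hab
      rcases hch with h | h
      · exact h
      · exfalso
        rw [x.1.1.apply_symm_apply, x.1.1.apply_symm_apply] at h
        exact absurd hlt (asymm h)⟩
  have hsort : ∀ (w : Equiv.Perm (Fin (m+1))) (g : Fin (m+1) → Fin n),
      Monotone g → (∀ k ∈ Aset w, g k.castSucc < g k.succ) →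
      w = Tuple.sort (F (g ∘ w.symm)) := by
    intro w g hg ha
    rw [Tuple.eq_sort_iff]
    have hfw : ∀ i, F (g ∘ ⇑w.symm) (w i) = toLex (g i, (w i).rev) := fun i => by
      simp [F]
    constructor
    · rw [Fin.monotone_iff_le_succ]
      intro k
      rw [Function.comp_apply, Function.comp_apply, hfw, hfw]
      rw [Prod.Lex.le_iff]
      rcases (hg (Fin.castSucc_le_succ k)).lt_or_eq with h | h
      · exact Or.inl h
      · refine Or.inr ⟨h, ?_⟩
        simp only [ofLex_toLex, Fin.rev_le_rev]
        by_contra hcon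
        have hlt : w k.castSucc < w k.succ := lt_of_not_ge hcon
        exact (ha k (mem_Aset.2 hlt)).ne h
    · intro i j hij hF
      exact absurd (w.injective (hFinj _ hF)) (ne_of_lt hij)
  have hbij : Function.Bijective invMap := by
    constructor
    · rintro ⟨⟨w1, hw1⟩, g1, hg1, hd1⟩ ⟨⟨w2, hw2⟩, g2, hg2, hd2⟩ heq
      simp only [invMap, Subtype.mk.injEq] at heq
      replace heq := Subtype.mk.inj heq
      obtain rfl : w1 = w2 := by
        rw [hsort w1 g1 hg1 hd1, heq, ← hsort w2 g2 hg2 hd2]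
      obtain rfl : g1 = g2 := by
        funext k
        have h := congrFun heq (w1 k)
        simpa using h
      rfl
    · rintro ⟨f, hf⟩
      have hs := Tuple.eq_sort_iff.mp (rfl : Tuple.sort (F f) = Tuple.sort (F f))
      set σ := Tuple.sort (F f) with hσ
      have hle_iff : ∀ i j : Fin (m+1), (F f ∘ σ) i ≤ (F f ∘ σ) j ↔
          (f (σ i) < f (σ j) ∨ f (σ i) = f (σ j) ∧ (σ j) ≤ (σ i)) := by
        intro i j
        show toLex (f (σ i), (σ i).rev) ≤ toLex (f (σ j), (σ j).rev) ↔ _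
        rw [Prod.Lex.le_iff]; simp only [ofLex_toLex, Fin.rev_le_rev]
      have hmono : Monotone (f ∘ σ) := by
        intro i j hij
        rcases (hle_iff i j).1 (hs.1 hij) with h | h
        · exact h.le
        · exact h.1.le
      have hLin : LinE le' σ := by
        intro k l hle hne
        have hkl : k ≠ l := fun h => hne (by rw [h])
        rcases lt_or_gt_of_ne hkl with h | h
        · exact h
        · exfalso
          have h1 : f (σ k) < f (σ l) := hf _ _ hle hne
          rcases (hle_iff l k).1 (hs.1 h.le) with h2 | h2
          · exact absurd h1 (asymm h2)
          · exact absurd h2.1 h1.ne'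
      refine ⟨⟨⟨σ, hLin⟩, ⟨f ∘ σ, hmono, ?_⟩⟩, ?_⟩
      · intro k hk
        have hlt := mem_Aset.1 hk
        rcases (hle_iff k.castSucc k.succ).1 (hs.1 (Fin.castSucc_le_succ k)) with h | h
        · exact h
        · exact absurd hlt (not_lt.2 h.2)
      · apply Subtype.ext
        funext x
        simp [invMap]
  rw [← Nat.card_eq_of_bijective invMap hbij, Nat.card_eq_fintype_card, Fintype.card_sigma]
  have hcount : ∀ w : {w : Equiv.Perm (Fin (m+1)) // LinE le' w},
      Fintype.card {g : Fin (m+1) → Fin n //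
          Monotone g ∧ ∀ k ∈ Aset w.1, g k.castSucc < g k.succ}
        = (n + (Dset w.1).card).choose (m+1) := by
    intro w
    rw [← Nat.card_eq_fintype_card, count_mono_strict (Aset w.1) n, Aset_card]
    congr 1
    have := Dset_card_le w.1
    omega
  rw [Finset.sum_congr rfl (fun w _ => hcount w),
    ← Finset.sum_subtype (Finset.univ.filter (LinE le')) (by simp)
      (fun w => (n + (Dset w).card).choose (m+1)), Finset.sum_filter]

end BijStrict

section Poly

open Polynomial

lemma desc_eval_prod (k : ℕ) (x : ℚ) :
    (descPochhammer ℚ k).eval x = ∏ j ∈ Finset.range k, (x - j) := by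
  induction k with
  | zero => simp [descPochhammer_zero]
  | succ k ih => rw [descPochhammer_succ_eval, ih, Finset.prod_range_succ]

lemma desc_reflect (m : ℕ) (y : ℚ) :
    (descPochhammer ℚ (m+1)).eval y
      = (-1)^(m+1) * (descPochhammer ℚ (m+1)).eval (-y + m) := by
  rw [desc_eval_prod, desc_eval_prod]
  have h1 : ∀ j ∈ Finset.range (m+1), (-y + (m:ℚ)) - j = -(y - ((m - j : ℕ) : ℚ)) := by
    intro j hj
    have hjm : j ≤ m := by simpa [Nat.lt_succ_iff] using hj
    rw [Nat.cast_sub hjm]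
    ring
  rw [Finset.prod_congr rfl h1]
  have h2 : ∏ j ∈ Finset.range (m+1), -(y - ((m - j : ℕ) : ℚ))
      = (-1)^(m+1) * ∏ j ∈ Finset.range (m+1), (y - ((m - j : ℕ) : ℚ)) := by
    rw [Finset.prod_congr rfl (fun j _ => show -(y - ((m - j : ℕ) : ℚ)) = (-1) * (y - ((m - j : ℕ) : ℚ)) by ring),
      Finset.prod_mul_distrib, Finset.prod_const, Finset.card_range]
  rw [h2]
  have h3 : ∏ j ∈ Finset.range (m+1), (y - ((m - j : ℕ) : ℚ))
      = ∏ j ∈ Finset.range (m+1), (y - (j : ℚ)) := by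
    have := Finset.prod_range_reflect (fun j => y - (j : ℚ)) (m+1)
    simpa using this
  rw [h3, ← mul_assoc, ← mul_pow]
  norm_num

lemma poly_eq_of_eval_pos_nat (p q : Polynomial ℚ)
    (h : ∀ n : ℕ, 0 < n → p.eval (n : ℚ) = q.eval (n : ℚ)) : p = q := by
  apply Polynomial.eq_of_infinite_eval_eq
  refine Set.infinite_of_injective_forall_mem (f := fun k : ℕ => ((k + 1 : ℕ) : ℚ)) ?_ ?_
  · intro a b hab
    have : (a + 1 : ℕ) = (b + 1 : ℕ) := Nat.cast_injective hab
    omega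
  · intro a
    exact h (a + 1) (Nat.succ_pos a)

lemma choose_cast_eq (m a : ℕ) :
    ((a.choose (m+1) : ℚ)) = (((m+1).factorial : ℚ))⁻¹
      * (descPochhammer ℚ (m+1)).eval (a : ℚ) := by
  rw [descPochhammer_eval_eq_descFactorial, Nat.descFactorial_eq_factorial_mul_choose,
    Nat.cast_mul, inv_mul_cancel_left₀]
  exact_mod_cast (Nat.factorial_ne_zero (m+1))

end Poly

/-- For any finite poset `P` with `p` elements, the strict
order polynomial `Ω̄(P, s)` (whose value at every positive integer `n` is the
number of strictly order-preserving maps `P → {1 < ⋯ < n}`) and the order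
polynomial `Ω(P, s)` (whose value at `n` is the number of order-preserving maps
`P → {1 < ⋯ < n}`) satisfy the reciprocity relation
`Ω̄(P, s) = (-1)^p Ω(P, -s)`. -/
theorem stmt7 {P : Type*} [PartialOrder P] [Fintype P]
    (Ω Ωbar : Polynomial ℚ)
    (hΩ : ∀ n : ℕ, 0 < n →
      Ω.eval (n : ℚ) = Nat.card {f : P → Fin n // Monotone f})
    (hΩbar : ∀ n : ℕ, 0 < n →
      Ωbar.eval (n : ℚ) = Nat.card {f : P → Fin n // StrictMono f}) :
    ∀ s : ℚ, Ωbar.eval s = (-1) ^ (Fintype.card P) * Ω.eval (-s) := by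
  classical
  rcases Nat.eq_zero_or_pos (Fintype.card P) with hp0 | hppos
  · -- empty poset
    haveI hPempty : IsEmpty P := Fintype.card_eq_zero_iff.mp hp0
    have hΩ1 : Ω = Polynomial.C 1 := by
      apply poly_eq_of_eval_pos_nat
      intro n hn
      have h1 : Nat.card {f : P → Fin n // Monotone f} = 1 := by
        rw [Nat.card_eq_one_iff_unique]
        refine ⟨⟨fun a b => Subtype.ext (funext fun x => isEmptyElim x)⟩,
          ⟨⟨fun x => isEmptyElim x, by intro a; exact isEmptyElim a⟩⟩⟩
      rw [hΩ n hn, h1]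
      simp
    have hΩbar1 : Ωbar = Polynomial.C 1 := by
      apply poly_eq_of_eval_pos_nat
      intro n hn
      have h1 : Nat.card {f : P → Fin n // StrictMono f} = 1 := by
        rw [Nat.card_eq_one_iff_unique]
        refine ⟨⟨fun a b => Subtype.ext (funext fun x => isEmptyElim x)⟩,
          ⟨⟨fun x => isEmptyElim x, by intro a; exact isEmptyElim a⟩⟩⟩
      rw [hΩbar n hn, h1]
      simp
    intro s
    rw [hΩ1, hΩbar1, hp0]
    simp
  · obtain ⟨m, hm⟩ : ∃ m, Fintype.card P = m + 1 :=
      ⟨Fintype.card P - 1, by omega⟩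
    -- natural labeling via a linear extension
    letI : Fintype (LinearExtension P) := inferInstanceAs (Fintype P)
    have hcard : Fintype.card (LinearExtension P) = m + 1 := by
      rw [← hm]
      exact Fintype.card_congr (Equiv.refl P)
    let iso := monoEquivOfFin (LinearExtension P) hcard
    let e : Fin (m+1) ≃ P := iso.toEquiv
    let le' : Fin (m+1) → Fin (m+1) → Prop := fun i j => e i ≤ e j
    have hnat : ∀ i j : Fin (m+1), le' i j → i ≠ j → i < j := by
      intro i j hle hne
      have hlt : e i < e j := lt_of_le_of_ne hle (e.injective.ne hne)
      have h2 : toLinearExtension (e i) < toLinearExtension (e j) :=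
        lt_of_le_of_ne (toLinearExtension.monotone hlt.le) (fun hc => hlt.ne hc)
      exact iso.lt_iff_lt.mp h2
    -- transport the counting problems to `Fin (m+1)`
    have hMcard : ∀ n : ℕ, Nat.card {f : P → Fin n // Monotone f}
        = Nat.card {f : Fin (m+1) → Fin n // MonoP le' f} := by
      intro n
      apply Nat.card_congr
      refine ⟨fun f => ⟨f.1 ∘ e, fun i j hij => f.2 hij⟩,
        fun f => ⟨f.1 ∘ e.symm, fun a b hab => ?_⟩,
        fun f => Subtype.ext (funext fun x => by simp),
        fun f => Subtype.ext (funext fun x => by simp)⟩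
      exact f.2 _ _ (show e (e.symm a) ≤ e (e.symm b) by
        rw [e.apply_symm_apply, e.apply_symm_apply]; exact hab)
    have hScard : ∀ n : ℕ, Nat.card {f : P → Fin n // StrictMono f}
        = Nat.card {f : Fin (m+1) → Fin n // SMonoP le' f} := by
      intro n
      apply Nat.card_congr
      refine ⟨fun f => ⟨f.1 ∘ e, fun i j hij hne =>
          f.2 (lt_of_le_of_ne hij (e.injective.ne hne))⟩,
        fun f => ⟨f.1 ∘ e.symm, fun a b hab => ?_⟩,
        fun f => Subtype.ext (funext fun x => by simp),
        fun f => Subtype.ext (funext fun x => by simp)⟩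
      refine f.2 _ _ (show e (e.symm a) ≤ e (e.symm b) by
        rw [e.apply_symm_apply, e.apply_symm_apply]; exact hab.le) ?_
      intro hc
      exact hab.ne (by simpa using congrArg e hc)
    -- the explicit polynomials
    let L : Finset (Equiv.Perm (Fin (m+1))) := Finset.univ.filter (LinE le')
    let d : Equiv.Perm (Fin (m+1)) → ℕ := fun w => (Dset w).card
    let Q : Polynomial ℚ := Polynomial.C ((((m+1).factorial : ℚ))⁻¹) *
      ∑ w ∈ L, (descPochhammer ℚ (m+1)).comp (Polynomial.X + Polynomial.C ((m : ℚ) - d w))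
    let Qb : Polynomial ℚ := Polynomial.C ((((m+1).factorial : ℚ))⁻¹) *
      ∑ w ∈ L, (descPochhammer ℚ (m+1)).comp (Polynomial.X + Polynomial.C ((d w : ℚ)))
    have hQeval : ∀ x : ℚ, Q.eval x = (((m+1).factorial : ℚ))⁻¹
        * ∑ w ∈ L, (descPochhammer ℚ (m+1)).eval (x + ((m:ℚ) - d w)) := by
      intro x
      simp [Q, Polynomial.eval_finset_sum]
    have hQbeval : ∀ x : ℚ, Qb.eval x = (((m+1).factorial : ℚ))⁻¹
        * ∑ w ∈ L, (descPochhammer ℚ (m+1)).eval (x + (d w : ℚ)) := by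
      intro x
      simp [Qb, Polynomial.eval_finset_sum]
    have hΩQ : Ω = Q := by
      apply poly_eq_of_eval_pos_nat
      intro n hn
      rw [hΩ n hn, hMcard n, weak_card le' hnat n, hQeval, Finset.mul_sum,
        ← Finset.sum_filter]
      rw [Nat.cast_sum]
      apply Finset.sum_congr rfl
      intro w hw
      have hdw : d w ≤ m := Dset_card_le w
      have hcast : ((n:ℚ) + ((m:ℚ) - d w)) = ((n + m - d w : ℕ) : ℚ) := by
        have : d w ≤ n + m := by omega
        push_cast [Nat.cast_sub this]
        ring
      rw [hcast, choose_cast_eq]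
    have hΩbarQb : Ωbar = Qb := by
      apply poly_eq_of_eval_pos_nat
      intro n hn
      rw [hΩbar n hn, hScard n, strict_card le' hnat n, hQbeval, Finset.mul_sum,
        ← Finset.sum_filter]
      rw [Nat.cast_sum]
      apply Finset.sum_congr rfl
      intro w hw
      have hcast : ((n:ℚ) + (d w : ℚ)) = ((n + d w : ℕ) : ℚ) := by push_cast; ring
      rw [hcast, choose_cast_eq]
    intro s
    have hterm : ∀ w, (descPochhammer ℚ (m+1)).eval (s + (d w : ℚ))
        = (-1:ℚ)^(m+1) * (descPochhammer ℚ (m+1)).eval (-s + ((m:ℚ) - d w)) := by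
      intro w
      have harg : -(s + (d w : ℚ)) + m = -s + ((m:ℚ) - d w) := by ring
      rw [desc_reflect m (s + (d w : ℚ)), harg]
    rw [hΩQ, hΩbarQb, hQbeval s, hQeval (-s), hm,
      Finset.sum_congr rfl (fun w _ => hterm w), ← Finset.mul_sum]
    ring
end
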